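/- Fortin–Soulié linear dependence relation for quadratic polynomials: let V₁, V₂, V₃ be affinely independent points of ℝ². For an ordered pair (X, Y) of distinct vertices, define the two Gauss–Legendre points of the edge from X to Y as g⁻(X,Y) = (X+Y)/2 − (Y−X)/(2√3) and g⁺(X,Y) = (X+Y)/2 + (Y−X)/(2√3). Then for every polynomial q : ℝ² → ℝ of total degree at most 2, summing over the cyclically oriented edges (V₁,V₂), (V₂,V₃), (V₃,V₁): [q(g⁺(V₁,V₂)) − q(g⁻(V₁,V₂))] + [q(g⁺(V₂,V₃)) − q(g⁻(V₂,V₃))] + [q(g⁺(V₃,V₁)) − q(g⁻(V₃,V₁))] = 0. -/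

import Mathlib

/-!
Write an edge from `X` to `Y` as `m ± t` with `m` its midpoint. For `q` of degree at most two,
`s ↦ q(m + s t) - q(m - s t)` is an odd polynomial of degree at most two, hence linear in `s`.
The Gauss points are `m ± t/√3`, so the difference of `q` at them is `(q(Y) - q(X))/√3`, and
these differences telescope around the triangle.
-/

open MeasureTheory Polynomial

/-- The "minus" Gauss–Legendre point of the edge from `X` to `Y`. -/
noncomputable def gaussMinus (X Y : Fin 2 → ℝ) : Fin 2 → ℝ :=
  (1 / 2 : ℝ) • (X + Y) - (1 / (2 * Real.sqrt 3)) • (Y - X)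

/-- The "plus" Gauss–Legendre point of the edge from `X` to `Y`. -/
noncomputable def gaussPlus (X Y : Fin 2 → ℝ) : Fin 2 → ℝ :=
  (1 / 2 : ℝ) • (X + Y) + (1 / (2 * Real.sqrt 3)) • (Y - X)

namespace Polynomial

variable {R : Type*} [CommRing R]

theorem eval_sub_eval_neg_of_natDegree_le_two {p : R[X]} (hp : p.natDegree ≤ 2) (s : R) :
    p.eval s - p.eval (-s) = s * (p.eval 1 - p.eval (-1)) := by
  simp only [eval_eq_sum_range' (Nat.lt_succ_of_le hp), Finset.sum_range_succ,
    Finset.sum_range_zero]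
  ring

end Polynomial

namespace MvPolynomial

variable {σ R : Type*} [CommRing R]

theorem natDegree_aeval_le_totalDegree (q : MvPolynomial σ R) {g : σ → R[X]}
    (hg : ∀ i, (g i).natDegree ≤ 1) : (aeval g q).natDegree ≤ q.totalDegree := by
  conv_lhs => rw [q.as_sum, map_sum]
  refine natDegree_sum_le_of_forall_le _ _ fun v hv => ?_
  rw [aeval_monomial, Polynomial.algebraMap_eq]
  refine (natDegree_C_mul_le _ _).trans ((natDegree_prod_le _ _).trans ?_)
  calc ∑ i ∈ v.support, (g i ^ v i).natDegree
      ≤ ∑ i ∈ v.support, v i := Finset.sum_le_sum fun i _ =>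
        natDegree_pow_le.trans (by simpa using Nat.mul_le_mul_left (v i) (hg i))
    _ ≤ q.totalDegree := le_totalDegree hv

theorem eval_add_smul_sub_eval_sub_smul {q : MvPolynomial σ R} (hq : q.totalDegree ≤ 2)
    (m t : σ → R) (s : R) :
    eval (m + s • t) q - eval (m - s • t) q = s * (eval (m + t) q - eval (m - t) q) := by
  set g : σ → R[X] := fun i => Polynomial.C (t i) * Polynomial.X + Polynomial.C (m i)
  have hg : ∀ i, (g i).natDegree ≤ 1 := fun i => natDegree_linear_le
  have heval : ∀ r : R, eval (m + r • t) q = (aeval g q).eval r := fun r => by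
    have hpt : (fun i => Polynomial.aeval r (g i)) = m + r • t := by
      funext i
      simp only [g, map_add, map_mul, Polynomial.aeval_C, Polynomial.aeval_X, Pi.add_apply,
        Pi.smul_apply, smul_eq_mul, Algebra.algebraMap_self, RingHom.id_apply]
      ring
    rw [← Polynomial.coe_aeval_eq_eval, comp_aeval_apply, hpt]
    rfl
  have hneg : ∀ r : R, eval (m - r • t) q = (aeval g q).eval (-r) := fun r => by
    rw [← heval, neg_smul, sub_eq_add_neg]
  have h_one := heval 1
  have h_neg_one := hneg 1
  rw [one_smul] at h_one h_neg_one
  rw [heval, hneg, h_one, h_neg_one]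
  exact eval_sub_eval_neg_of_natDegree_le_two
    ((natDegree_aeval_le_totalDegree q hg).trans hq) s

end MvPolynomial

open MvPolynomial in
theorem eval_gaussPlus_sub_eval_gaussMinus {q : MvPolynomial (Fin 2) ℝ} (hq : q.totalDegree ≤ 2)
    (X Y : Fin 2 → ℝ) :
    eval (gaussPlus X Y) q - eval (gaussMinus X Y) q = (√3)⁻¹ * (eval Y q - eval X q) := by
  set m : Fin 2 → ℝ := (1 / 2 : ℝ) • (X + Y)
  set t : Fin 2 → ℝ := (1 / 2 : ℝ) • (Y - X)
  have hplus : gaussPlus X Y = m + (√3)⁻¹ • t := by simp only [gaussPlus, m, t]; module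
  have hminus : gaussMinus X Y = m - (√3)⁻¹ • t := by simp only [gaussMinus, m, t]; module
  have hY : Y = m + t := by simp only [m, t]; module
  have hX : X = m - t := by simp only [m, t]; module
  rw [hplus, hminus, eval_add_smul_sub_eval_sub_smul hq, ← hY, ← hX]

theorem fortin_soulie_relation_general
    (V₁ V₂ V₃ : Fin 2 → ℝ)
    (q : MvPolynomial (Fin 2) ℝ) (hq : q.totalDegree ≤ 2) :
    (MvPolynomial.eval (gaussPlus V₁ V₂) q - MvPolynomial.eval (gaussMinus V₁ V₂) q) +
    (MvPolynomial.eval (gaussPlus V₂ V₃) q - MvPolynomial.eval (gaussMinus V₂ V₃) q) +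
    (MvPolynomial.eval (gaussPlus V₃ V₁) q - MvPolynomial.eval (gaussMinus V₃ V₁) q)
      = 0 := by
  simp only [eval_gaussPlus_sub_eval_gaussMinus hq]
  ring

/-- Fortin–Soulié linear dependence relation: for any quadratic polynomial, the cyclic sum
over the oriented edges of the differences of the values at the two Gauss–Legendre
points of each edge vanishes. -/
theorem fortin_soulie_relation
    (V₁ V₂ V₃ : Fin 2 → ℝ) (hV : AffineIndependent ℝ ![V₁, V₂, V₃])
    (q : MvPolynomial (Fin 2) ℝ) (hq : q.totalDegree ≤ 2) :
    (MvPolynomial.eval (gaussPlus V₁ V₂) q - MvPolynomial.eval (gaussMinus V₁ V₂) q) +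
    (MvPolynomial.eval (gaussPlus V₂ V₃) q - MvPolynomial.eval (gaussMinus V₂ V₃) q) +
    (MvPolynomial.eval (gaussPlus V₃ V₁) q - MvPolynomial.eval (gaussMinus V₃ V₁) q)
      = 0 :=
  fortin_soulie_relation_general V₁ V₂ V₃ q hq
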